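/- arXiv:1902.01656 — 9 statements merged into one kernel-verified Lean document; each statement's English description precedes it below -/
import Mathlib

section
/- A join-semilattice is GS-distributive if and only if it is K-distributive and downward directed. -/
/-!
Applied to `a ≤ a ⊔ b`, GS-distributivity writes `a = a' ⊔ b'` with `b' ≤ b`, and `b'` is a
common lower bound of `a` and `b`. Conversely, K-distributivity covers every `x ≤ a ⊔ b` except
those below `a` or below `b`; if, say, `x ≤ a`, a common lower bound `c` of `x` and `b` gives the
splitting `x = x ⊔ c`.
-/

section SemilatticeSup

variable {J : Type*} [SemilatticeSup J] {a b c x : J}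

def SupSplits (a b x : J) : Prop :=
  ∃ a' b' : J, a' ≤ a ∧ b' ≤ b ∧ x = a' ⊔ b'

theorem SupSplits.exists_le_le (h : SupSplits a b a) : ∃ c, c ≤ a ∧ c ≤ b := by
  obtain ⟨a', b', -, hb', ha⟩ := h
  exact ⟨b', ha ▸ le_sup_right, hb'⟩

theorem supSplits_of_le_left (hxa : x ≤ a) (hcx : c ≤ x) (hcb : c ≤ b) : SupSplits a b x :=
  ⟨x, c, hxa, hcb, (sup_eq_left.mpr hcx).symm⟩

theorem supSplits_of_le_right (hxb : x ≤ b) (hcx : c ≤ x) (hca : c ≤ a) : SupSplits a b x :=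
  ⟨c, x, hca, hxb, (sup_eq_right.mpr hcx).symm⟩

end SemilatticeSup

theorem stmt_5 {J : Type*} [SemilatticeSup J] :
    (∀ a b x : J, x ≤ a ⊔ b → ∃ a' b' : J, a' ≤ a ∧ b' ≤ b ∧ x = a' ⊔ b') ↔
    ((∀ a b x : J, x ≤ a ⊔ b → ¬ x ≤ a → ¬ x ≤ b →
        ∃ a' b' : J, a' ≤ a ∧ b' ≤ b ∧ x = a' ⊔ b') ∧
      (∀ a b : J, ∃ c : J, c ≤ a ∧ c ≤ b)) := by
  constructor
  · intro hGS
    exact ⟨fun a b x hx _ _ => hGS a b x hx,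
      fun a b => SupSplits.exists_le_le (hGS a b a le_sup_left)⟩
  · rintro ⟨hK, hDirected⟩ a b x hx
    by_cases hxa : x ≤ a
    · obtain ⟨c, hcx, hcb⟩ := hDirected x b
      exact supSplits_of_le_left hxa hcx hcb
    by_cases hxb : x ≤ b
    · obtain ⟨c, hcx, hca⟩ := hDirected x a
      exact supSplits_of_le_right hxb hcx hca
    exact hK a b x hx hxa hxb
end

section
/- The three-element join-semilattice {a, b, 1} with a < 1, b < 1, and a, b incomparable, is K-distributive but not GS-distributive. -/
/-!
GS-distributivity applied to `x ≤ u ⊔ x` yields a common lower bound of `u` and `x`, but `a` and `b`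
have none. For K-distributivity, the hypotheses `x ≰ u`, `x ≰ v` force `u` and `v` to be
incomparable, hence `{u, v} = {a, b}`, and then `x = 1 = u ⊔ v` decomposes trivially.
-/

section Distributivity

variable (J : Type*) [SemilatticeSup J]

def GSDistributive : Prop :=
  ∀ u v x : J, x ≤ u ⊔ v → ∃ u' v' : J, u' ≤ u ∧ v' ≤ v ∧ x = u' ⊔ v'

def KDistributive : Prop :=
  ∀ u v x : J, x ≤ u ⊔ v → ¬ x ≤ u → ¬ x ≤ v → ∃ u' v' : J, u' ≤ u ∧ v' ≤ v ∧ x = u' ⊔ v'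

variable {J}

theorem GSDistributive.exists_le_le (h : GSDistributive J) (u x : J) : ∃ w, w ≤ u ∧ w ≤ x := by
  obtain ⟨u', v', hu', -, rfl⟩ := h u x x le_sup_right
  exact ⟨u', hu', le_sup_left⟩

theorem KDistributive.of_forall_not_le
    (h : ∀ u v : J, ¬ u ≤ v → ¬ v ≤ u → ∀ x, x = u ∨ x = v ∨ x = u ⊔ v) : KDistributive J := by
  intro u v x hx hxu hxv
  have huv : ¬ u ≤ v := fun huv => hxv (sup_eq_right.2 huv ▸ hx)
  have hvu : ¬ v ≤ u := fun hvu => hxu (sup_eq_left.2 hvu ▸ hx)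
  rcases h u v huv hvu x with rfl | rfl | rfl
  · exact absurd le_rfl hxu
  · exact absurd le_rfl hxv
  · exact ⟨u, v, le_rfl, le_rfl, rfl⟩

end Distributivity

section ThreeElement

variable {J : Type*} [SemilatticeSup J] {a b one : J}

theorem le_of_forall_eq_or_eq_or_eq (ha : a < one) (hb : b < one)
    (hcard : ∀ x : J, x = a ∨ x = b ∨ x = one) (x : J) : x ≤ one := by
  rcases hcard x with rfl | rfl | rfl
  exacts [ha.le, hb.le, le_rfl]

theorem eq_or_eq_or_eq_sup_of_not_le (ha : a < one) (hb : b < one) (hab : ¬ a ≤ b)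
    (hba : ¬ b ≤ a) (hcard : ∀ x : J, x = a ∨ x = b ∨ x = one) {u v : J} (huv : ¬ u ≤ v)
    (hvu : ¬ v ≤ u) (x : J) : x = u ∨ x = v ∨ x = u ⊔ v := by
  have hle := le_of_forall_eq_or_eq_or_eq ha hb hcard
  have hsup : a ⊔ b = one := by
    rcases hcard (a ⊔ b) with h | h | h
    · exact absurd (h ▸ le_sup_right) hba
    · exact absurd (h ▸ le_sup_left) hab
    · exact h
  rcases hcard u with rfl | rfl | rfl <;> rcases hcard v with rfl | rfl | rfl <;>
    rcases hcard x with rfl | rfl | rfl <;> simp_all [sup_comm]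

theorem not_exists_le_le (ha : a < one) (hab : ¬ a ≤ b) (hba : ¬ b ≤ a)
    (hcard : ∀ x : J, x = a ∨ x = b ∨ x = one) : ¬ ∃ w, w ≤ a ∧ w ≤ b := by
  rintro ⟨w, hwa, hwb⟩
  rcases hcard w with rfl | rfl | rfl
  exacts [hab hwb, hba hwa, ha.not_ge hwa]

end ThreeElement

/-- The three-element join-semilattice {a, b, 1} with a < 1, b < 1 and a, b
incomparable is K-distributive but not GS-distributive. -/
theorem stmt_6 {J : Type*} [SemilatticeSup J] (a b one : J)
    (ha : a < one) (hb : b < one) (hab : ¬ a ≤ b) (hba : ¬ b ≤ a)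
    (hcard : ∀ x : J, x = a ∨ x = b ∨ x = one) :
    (∀ u v x : J, x ≤ u ⊔ v → ¬ x ≤ u → ¬ x ≤ v →
        ∃ u' v' : J, u' ≤ u ∧ v' ≤ v ∧ x = u' ⊔ v') ∧
    ¬ (∀ u v x : J, x ≤ u ⊔ v →
        ∃ u' v' : J, u' ≤ u ∧ v' ≤ v ∧ x = u' ⊔ v') :=
  ⟨KDistributive.of_forall_not_le fun _ _ => eq_or_eq_or_eq_sup_of_not_le ha hb hab hba hcard,
    fun h => not_exists_le_le ha hab hba hcard (GSDistributive.exists_le_le h a b)⟩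
end

section
/- Every K-distributive join-semilattice is H-distributive (ND-distributive): for all h, a, b, c, if (for all x, x ≤ h and x ≤ a imply x ≤ c) and (for all x, x ≤ h and x ≤ b imply x ≤ c), then for all x, x ≤ h and x ≤ a ∨ b imply x ≤ c. -/
theorem stmt_7 {J : Type*} [SemilatticeSup J]
    (hK : ∀ a b x : J, x ≤ a ⊔ b → ¬ x ≤ a → ¬ x ≤ b →
      ∃ a' b' : J, a' ≤ a ∧ b' ≤ b ∧ x = a' ⊔ b') :
    ∀ h a b c : J, (∀ x : J, x ≤ h → x ≤ a → x ≤ c) →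
      (∀ x : J, x ≤ h → x ≤ b → x ≤ c) →
      ∀ x : J, x ≤ h → x ≤ a ⊔ b → x ≤ c := by
  intro h a b c ha hb x hxh hxab
  by_cases hxa : x ≤ a
  · exact ha x hxh hxa
  by_cases hxb : x ≤ b
  · exact hb x hxh hxb
  obtain ⟨a', b', ha', hb', rfl⟩ := hK a b x hxab hxa hxb
  exact sup_le (ha a' (le_sup_left.trans hxh) ha') (hb b' (le_sup_right.trans hxh) hb')
end

section
/- For finite join-semilattices, H-distributivity (condition D∨) implies K-distributivity; hence in the finite case the two notions coincide. -/
/-!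
If `x ≤ a ⊔ b`, H-distributivity with `h = x` shows that `x` lies below the join of its
common lower bounds with `a` and with `b`. In a finite join-semilattice these two sets have
greatest elements `a' ≤ a` and `b' ≤ b` as soon as they are nonempty, and then `x = a' ⊔ b'`.
Nonemptiness is H-distributivity again: if nothing lies below both `x` and `a`, then `x ≤ b`.
-/

def IsHDistributive (J : Type*) [SemilatticeSup J] : Prop :=
  ∀ h a b c : J, (∀ x : J, x ≤ h → x ≤ a → x ≤ c) → (∀ x : J, x ≤ h → x ≤ b → x ≤ c) →
    ∀ x : J, x ≤ h → x ≤ a ⊔ b → x ≤ c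

section

variable {J : Type*} [SemilatticeSup J]

lemma SupClosed.exists_isGreatest {s : Set J} (hs : SupClosed s) (hfin : s.Finite)
    (hne : s.Nonempty) : ∃ m, IsGreatest s m := by
  have hne' : hfin.toFinset.Nonempty := hfin.toFinset_nonempty.mpr hne
  refine ⟨hfin.toFinset.sup' hne' id, ?_, fun y hy => ?_⟩
  · exact hs.finsetSup'_mem hne' fun y hy => hfin.mem_toFinset.mp hy
  · exact Finset.le_sup' (f := id) (hfin.mem_toFinset.mpr hy)

lemma exists_isGreatest_commonLowerBounds [Finite J] {x a : J} (h : ∃ y, y ≤ x ∧ y ≤ a) :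
    ∃ m, IsGreatest {y | y ≤ x ∧ y ≤ a} m :=
  SupClosed.exists_isGreatest (fun _ hy _ hz => ⟨sup_le hy.1 hz.1, sup_le hy.2 hz.2⟩)
    (Set.toFinite _) h

lemma IsHDistributive.exists_commonLowerBound_of_not_le (hH : IsHDistributive J) {a b x : J}
    (hxab : x ≤ a ⊔ b) (hxb : ¬ x ≤ b) : ∃ y, y ≤ x ∧ y ≤ a := by
  by_contra! h
  exact hxb (hH x a b b (fun y hyx hya => absurd hya (h y hyx)) (fun _ _ => id) x le_rfl hxab)

end

theorem stmt_8 {J : Type*} [SemilatticeSup J] [Fintype J]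
    (hH : ∀ h a b c : J, (∀ x : J, x ≤ h → x ≤ a → x ≤ c) →
      (∀ x : J, x ≤ h → x ≤ b → x ≤ c) →
      ∀ x : J, x ≤ h → x ≤ a ⊔ b → x ≤ c) :
    ∀ a b x : J, x ≤ a ⊔ b → ¬ x ≤ a → ¬ x ≤ b →
      ∃ a' b' : J, a' ≤ a ∧ b' ≤ b ∧ x = a' ⊔ b' := by
  have hH : IsHDistributive J := hH
  intro a b x hxab hxa hxb
  obtain ⟨a', ⟨ha'x, ha'a⟩, ha'_greatest⟩ :=
    exists_isGreatest_commonLowerBounds (hH.exists_commonLowerBound_of_not_le hxab hxb)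
  obtain ⟨b', ⟨hb'x, hb'b⟩, hb'_greatest⟩ :=
    exists_isGreatest_commonLowerBounds
      (hH.exists_commonLowerBound_of_not_le (sup_comm a b ▸ hxab) hxa)
  refine ⟨a', b', ha'a, hb'b, le_antisymm ?_ (sup_le ha'x hb'x)⟩
  exact hH x a b (a' ⊔ b') (fun y hyx hya => le_sup_of_le_left (ha'_greatest ⟨hyx, hya⟩))
    (fun y hyx hyb => le_sup_of_le_right (hb'_greatest ⟨hyx, hyb⟩)) x le_rfl hxab
end

section
/- A join-semilattice satisfies condition (LR) — for all a, b, c: {c, a∨b}^l ⊆ ({c,a}^l ∪ {c,b}^l)^{ul} — if and only if it satisfies condition (D∨) — for all h, a, b, c: if {h,a}^l ∪ {h,b}^l ⊆ {c}^l then {h, a∨b}^l ⊆ {c}^l. -/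
theorem subset_lowerBounds_upperBounds_iff {α : Type*} [Preorder α] {s t : Set α} :
    t ⊆ lowerBounds (upperBounds s) ↔
      ∀ u : α, s ⊆ lowerBounds {u} → t ⊆ lowerBounds {u} := by
  simp only [lowerBounds_singleton, ← mem_upperBounds_iff_subset_Iic]
  exact ⟨fun h u hu x hx => h hx hu, fun h x hx u hu => h u hu hx⟩

theorem stmt_10 {J : Type*} [SemilatticeSup J] :
    (∀ a b c : J, lowerBounds {c, a ⊔ b} ⊆
        lowerBounds (upperBounds (lowerBounds {c, a} ∪ lowerBounds {c, b}))) ↔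
    (∀ h a b c : J, lowerBounds {h, a} ∪ lowerBounds {h, b} ⊆ lowerBounds {c} →
        lowerBounds {h, a ⊔ b} ⊆ lowerBounds {c}) := by
  -- Unfolded this way, (LR) at `a b c` is (D∨) at `h := c`, quantified over the new `c`.
  simp only [subset_lowerBounds_upperBounds_iff]
  exact ⟨fun h c a b u => h a b c u, fun h a b c u => h c a b u⟩
end

section
/- Every H-distributive join-semilattice is B-distributive: if H-distributivity holds and a ∧ b exists, then inf{x ∨ a, x ∨ b} exists and equals x ∨ (a ∧ b), for all x. -/
/-!
Let `z` lie below `x ⊔ a` and `x ⊔ b`. Applying H-distributivity below `z` to the join `x ⊔ a`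
leaves the elements `y ≤ z` with `y ≤ a`; such a `y` lies below `x ⊔ b`, and a second application,
now to `x ⊔ b`, leaves the elements below both `a` and `b`, i.e. below `a ⊓ b`. Hence `z ≤ x ⊔ (a ⊓ b)`.
-/

def HDistributive (J : Type*) [SemilatticeSup J] : Prop :=
  ∀ h a b c : J, (∀ y : J, y ≤ h → y ≤ a → y ≤ c) →
    (∀ y : J, y ≤ h → y ≤ b → y ≤ c) →
    ∀ y : J, y ≤ h → y ≤ a ⊔ b → y ≤ c

theorem sup_mem_lowerBounds_pair {J : Type*} [SemilatticeSup J] {a b m : J} (x : J)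
    (hm : m ∈ lowerBounds {a, b}) : x ⊔ m ∈ lowerBounds {x ⊔ a, x ⊔ b} := by
  rw [lowerBounds_insert, lowerBounds_singleton] at hm ⊢
  exact ⟨sup_le_sup_left hm.1 x, sup_le_sup_left hm.2 x⟩

namespace HDistributive

variable {J : Type*} [SemilatticeSup J]

theorem le_of_le_sup (hH : HDistributive J) {h a b c : J}
    (ha : ∀ y, y ≤ h → y ≤ a → y ≤ c) (hb : ∀ y, y ≤ h → y ≤ b → y ≤ c)
    (hab : h ≤ a ⊔ b) : h ≤ c :=
  hH h a b c ha hb h le_rfl hab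

theorem le_sup_of_le_of_le_sup (hH : HDistributive J) {a b m x y : J} (hm : IsGLB {a, b} m)
    (hya : y ≤ a) (hyb : y ≤ x ⊔ b) : y ≤ x ⊔ m :=
  hH.le_of_le_sup (fun _ _ hwx => le_sup_of_le_left hwx)
    (fun w hwy hwb => le_sup_of_le_right <| hm.2 <| by
      rw [lowerBounds_insert, lowerBounds_singleton]
      exact ⟨hwy.trans hya, hwb⟩)
    hyb

theorem le_sup_of_le_sup_of_le_sup (hH : HDistributive J) {a b m x z : J} (hm : IsGLB {a, b} m)
    (hza : z ≤ x ⊔ a) (hzb : z ≤ x ⊔ b) : z ≤ x ⊔ m :=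
  hH.le_of_le_sup (fun _ _ hwx => le_sup_of_le_left hwx)
    (fun _ hwz hwa => hH.le_sup_of_le_of_le_sup hm hwa (hwz.trans hzb)) hza

end HDistributive

theorem stmt_14 {J : Type*} [SemilatticeSup J]
    (hH : ∀ h a b c : J, (∀ y : J, y ≤ h → y ≤ a → y ≤ c) →
      (∀ y : J, y ≤ h → y ≤ b → y ≤ c) →
      ∀ y : J, y ≤ h → y ≤ a ⊔ b → y ≤ c) :
    ∀ a b m x : J, IsGLB {a, b} m → IsGLB {x ⊔ a, x ⊔ b} (x ⊔ m) := by
  intro a b m x hm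
  refine ⟨sup_mem_lowerBounds_pair x hm.1, fun z hz => ?_⟩
  rw [lowerBounds_insert, lowerBounds_singleton] at hz
  exact HDistributive.le_sup_of_le_sup_of_le_sup hH hm hz.1 hz.2
end

section
/- Every join-semilattice equipped with an arrow operation is H-distributive: if for all a, b there exists a → b = max{c : ∀x, x ≤ a and x ≤ c imply x ≤ b}, then condition (D∨) holds. -/
/-! A lower set with a greatest element `m` is the principal ideal `Iic m`, hence closed under
joins; the arrow `h → c` is the greatest element of such a lower set. -/

theorem IsGreatest.sup_mem_of_isLowerSet {J : Type*} [SemilatticeSup J] {s : Set J} {m a b : J}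
    (hm : IsGreatest s m) (hs : IsLowerSet s) (ha : a ∈ s) (hb : b ∈ s) : a ⊔ b ∈ s :=
  hs (sup_le (hm.2 ha) (hm.2 hb)) hm.1

theorem isLowerSet_setOf_forall_le_imp_le {J : Type*} [Preorder J] (a b : J) :
    IsLowerSet {c : J | ∀ x : J, x ≤ a → x ≤ c → x ≤ b} :=
  fun _ _ hdc hc x hxa hxd => hc x hxa (hxd.trans hdc)

theorem stmt_16 {J : Type*} [SemilatticeSup J]
    (harrow : ∀ a b : J, ∃ m : J, IsGreatest {c : J | ∀ x : J, x ≤ a → x ≤ c → x ≤ b} m) :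
    ∀ h a b c : J, (∀ x : J, x ≤ h → x ≤ a → x ≤ c) →
      (∀ x : J, x ≤ h → x ≤ b → x ≤ c) →
      ∀ x : J, x ≤ h → x ≤ a ⊔ b → x ≤ c := by
  intro h a b c ha hb
  obtain ⟨m, hm⟩ := harrow h c
  exact hm.sup_mem_of_isLowerSet (isLowerSet_setOf_forall_le_imp_le h c) ha hb
end

section
/- Every finite H-distributive join-semilattice has an arrow: for all a, b there exists an element a → b which is the maximum of the set {c : ∀x, x ≤ a and x ≤ c imply x ≤ b}. -/
theorem Set.Finite.exists_isGreatest_of_supClosed {α : Type*} [SemilatticeSup α] {s : Set α}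
    (hfin : s.Finite) (hne : s.Nonempty) (hsup : SupClosed s) : ∃ m, IsGreatest s m := by
  have hne' : hfin.toFinset.Nonempty := hfin.toFinset_nonempty.mpr hne
  refine ⟨hfin.toFinset.sup' hne' id, ?_, fun c hc => ?_⟩
  · simpa using hsup.finsetSup'_mem hne' (f := id) (by simp)
  · exact hfin.toFinset.le_sup' id (hfin.mem_toFinset.mpr hc)

theorem stmt_17 {J : Type*} [SemilatticeSup J] [Fintype J]
    (hH : ∀ h a b c : J, (∀ x : J, x ≤ h → x ≤ a → x ≤ c) →
      (∀ x : J, x ≤ h → x ≤ b → x ≤ c) →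
      ∀ x : J, x ≤ h → x ≤ a ⊔ b → x ≤ c) :
    ∀ a b : J, ∃ m : J, IsGreatest {c : J | ∀ x : J, x ≤ a → x ≤ c → x ≤ b} m := by
  intro a b
  have hsup : SupClosed {c : J | ∀ x : J, x ≤ a → x ≤ c → x ≤ b} :=
    fun c hc d hd => hH a c d b hc hd
  exact (Set.toFinite _).exists_isGreatest_of_supClosed ⟨b, fun _ _ hxb => hxb⟩ hsup
end

section
/- Let L = {0, 1/2, 1} with the usual order, and let J = L × L with the product order, viewed as a Heyting algebra. The subset B = (L × L) \ {(0,1/2), (1/2,0)} is closed under join and under the Heyting implication of J, but the set {(c,d) ∈ B : ∀(x,y) ∈ B, (x,y) ≤ (c,d) and (x,y) ≤ (1/2,1/2) imply (x,y) ≤ (0,0)} has no maximum element; hence B, as a join-semilattice, admits no arrow for the pair ((1/2,1/2), (0,0)). -/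
/-- The three-element chain L = {0, 1/2, 1} ⊆ ℚ with the usual order. -/
def Lchain : Set ℚ := {0, 1/2, 1}

def e0 : Lchain := ⟨0, by simp [Lchain]⟩
def eh : Lchain := ⟨1/2, by simp [Lchain]⟩
def e1 : Lchain := ⟨1, by simp [Lchain]⟩

/-- The Gödel implication on the chain L. -/
noncomputable def godel (x y : Lchain) : Lchain :=
  if (x : ℚ) ≤ (y : ℚ) then e1 else y

/-- The Heyting implication on J = L × L, computed componentwise. -/
noncomputable def himp2 (p q : Lchain × Lchain) : Lchain × Lchain :=
  (godel p.1 q.1, godel p.2 q.2)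

/-- The subset B = (L × L) \ {(0,1/2), (1/2,0)}. -/
def Bset : Set (Lchain × Lchain) := {p | p ≠ (e0, eh) ∧ p ≠ (eh, e0)}

/-!
The only elements of `B` below `(0,1/2)` or `(1/2,0)` are `(0,0)`, so neither removed point is a
join of elements of `B`. The Gödel implication `x ⇒ y` is either `1` or `y`, so `p ⇒ q` can be a
removed point only if `q` is. Finally `(0,1)` and `(1,0)` both qualify for `(1/2,1/2) → (0,0)`, but
any common upper bound lies above `(1/2,1/2) ∈ B`, which does not lie below `(0,0)`.
-/

namespace Lchain

theorem eq_e0_or_eq_eh_or_eq_e1 (x : Lchain) : x = e0 ∨ x = eh ∨ x = e1 := by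
  obtain ⟨v, hv⟩ := x
  simp only [Lchain, Set.mem_insert_iff, Set.mem_singleton_iff] at hv
  rcases hv with rfl | rfl | rfl <;> simp [e0, eh, e1]

theorem e0_ne_eh : e0 ≠ eh := by simp [e0, eh, Subtype.ext_iff]

theorem e0_ne_e1 : e0 ≠ e1 := by simp [e0, e1, Subtype.ext_iff]

theorem eh_ne_e1 : eh ≠ e1 := by norm_num [eh, e1, Subtype.ext_iff]

theorem e0_le (x : Lchain) : e0 ≤ x := by
  rcases eq_e0_or_eq_eh_or_eq_e1 x with rfl | rfl | rfl <;>
    norm_num [e0, eh, e1, ← Subtype.coe_le_coe]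

theorem le_e1 (x : Lchain) : x ≤ e1 := by
  rcases eq_e0_or_eq_eh_or_eq_e1 x with rfl | rfl | rfl <;>
    norm_num [e0, eh, e1, ← Subtype.coe_le_coe]

theorem eh_not_le_e0 : ¬ eh ≤ e0 := by norm_num [e0, eh, ← Subtype.coe_le_coe]

theorem eq_e0_of_le_e0 {x : Lchain} (h : x ≤ e0) : x = e0 :=
  le_antisymm h (e0_le x)

theorem eq_e0_of_lt_eh {x : Lchain} (h : x < eh) : x = e0 := by
  rcases eq_e0_or_eq_eh_or_eq_e1 x with rfl | rfl | rfl
  · rfl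
  · exact absurd h (lt_irrefl _)
  · exact absurd h (not_lt.mpr (le_e1 eh))

theorem godel_eq_e1_or_eq_right (x y : Lchain) : godel x y = e1 ∨ godel x y = y := by
  unfold godel
  split_ifs <;> simp

end Lchain

open Lchain

theorem eq_right_of_himp2_eq {p q r : Lchain × Lchain} (h : himp2 p q = r)
    (h1 : r.1 ≠ e1) (h2 : r.2 ≠ e1) : q = r := by
  subst h
  exact Prod.ext ((godel_eq_e1_or_eq_right _ _).resolve_left h1).symm
    ((godel_eq_e1_or_eq_right _ _).resolve_left h2).symm

theorem himp2_mem_Bset (p : Lchain × Lchain) {q : Lchain × Lchain} (hq : q ∈ Bset) :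
    himp2 p q ∈ Bset :=
  ⟨fun h => hq.1 (eq_right_of_himp2_eq h e0_ne_e1 eh_ne_e1),
    fun h => hq.2 (eq_right_of_himp2_eq h eh_ne_e1 e0_ne_e1)⟩

theorem eq_of_mem_Bset_of_le_e0_eh {p : Lchain × Lchain} (hp : p ∈ Bset) (h : p ≤ (e0, eh)) :
    p = (e0, e0) := by
  obtain ⟨x, y⟩ := p
  obtain ⟨hx, hy⟩ : x ≤ e0 ∧ y ≤ eh := h
  obtain rfl := eq_e0_of_le_e0 hx
  have hy' : y ≠ eh := fun h => hp.1 (by rw [h])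
  rw [eq_e0_of_lt_eh (lt_of_le_of_ne hy hy')]

theorem eq_of_mem_Bset_of_le_eh_e0 {p : Lchain × Lchain} (hp : p ∈ Bset) (h : p ≤ (eh, e0)) :
    p = (e0, e0) := by
  obtain ⟨x, y⟩ := p
  obtain ⟨hx, hy⟩ : x ≤ eh ∧ y ≤ e0 := h
  obtain rfl := eq_e0_of_le_e0 hy
  have hx' : x ≠ eh := fun h => hp.2 (by rw [h])
  rw [eq_e0_of_lt_eh (lt_of_le_of_ne hx hx')]

theorem sup_mem_Bset {p q : Lchain × Lchain} (hp : p ∈ Bset) (hq : q ∈ Bset) : p ⊔ q ∈ Bset := by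
  constructor <;> intro h
  · rw [eq_of_mem_Bset_of_le_e0_eh hp (h ▸ le_sup_left),
      eq_of_mem_Bset_of_le_e0_eh hq (h ▸ le_sup_right), sup_idem, Prod.mk.injEq] at h
    exact e0_ne_eh h.2
  · rw [eq_of_mem_Bset_of_le_eh_e0 hp (h ▸ le_sup_left),
      eq_of_mem_Bset_of_le_eh_e0 hq (h ▸ le_sup_right), sup_idem, Prod.mk.injEq] at h
    exact e0_ne_eh h.1

/-- The arrow `a → b` of `B`, when it exists, is the greatest element of this set. -/
def arrowCandidates {α : Type*} [LE α] (B : Set α) (a b : α) : Set α :=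
  {c | c ∈ B ∧ ∀ x ∈ B, x ≤ c → x ≤ a → x ≤ b}

theorem e0_e1_mem_arrowCandidates : (e0, e1) ∈ arrowCandidates Bset (eh, eh) (e0, e0) :=
  ⟨⟨by simp [eh_ne_e1.symm], by simp [e0_ne_eh]⟩,
    fun _ hx hc ha => (eq_of_mem_Bset_of_le_e0_eh hx ⟨hc.1, ha.2⟩).le⟩

theorem e1_e0_mem_arrowCandidates : (e1, e0) ∈ arrowCandidates Bset (eh, eh) (e0, e0) :=
  ⟨⟨by simp [e0_ne_e1.symm], by simp [eh_ne_e1.symm]⟩,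
    fun _ hx hc ha => (eq_of_mem_Bset_of_le_eh_e0 hx ⟨ha.1, hc.2⟩).le⟩

theorem not_isGreatest_arrowCandidates (m : Lchain × Lchain) :
    ¬ IsGreatest (arrowCandidates Bset (eh, eh) (e0, e0)) m := by
  rintro ⟨⟨-, hm⟩, hub⟩
  have hhalf : ((eh, eh) : Lchain × Lchain) ≤ (e0, e1) ⊔ (e1, e0) :=
    ⟨le_sup_of_le_right (le_e1 eh), le_sup_of_le_left (le_e1 eh)⟩
  have hbelow := hm (eh, eh) ⟨by simp [e0_ne_eh.symm], by simp [e0_ne_eh.symm]⟩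
    (hhalf.trans (sup_le (hub e0_e1_mem_arrowCandidates) (hub e1_e0_mem_arrowCandidates))) le_rfl
  exact eh_not_le_e0 hbelow.1

/-- B is closed under join and Heyting implication, but the set of candidates
for the arrow (1/2,1/2) → (0,0) within B has no greatest element. -/
theorem stmt_19 :
    (∀ p ∈ Bset, ∀ q ∈ Bset, p ⊔ q ∈ Bset) ∧
    (∀ p ∈ Bset, ∀ q ∈ Bset, himp2 p q ∈ Bset) ∧
    ¬ ∃ m : Lchain × Lchain,
        IsGreatest {p | p ∈ Bset ∧ ∀ q ∈ Bset, q ≤ p → q ≤ (eh, eh) → q ≤ (e0, e0)} m :=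
  ⟨fun _ hp _ hq => sup_mem_Bset hp hq, fun p _ _ hq => himp2_mem_Bset p hq,
    fun ⟨m, hm⟩ => not_isGreatest_arrowCandidates m hm⟩
end
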